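/- Let T ≥ 1, τ ∈ ℝ, and let N ≥ 1 be an integer. Define h(t) = e^{−(t/T)²} T^{−6N−24} (t² + (1/2 + iτ)²)³ (t² + (1/2 − iτ)²)³ Π_{n=1}^{N+2} (t² + (n − 1/2)²)(t² + (n + iτ − 1/2)²)(t² + (n − iτ − 1/2)²). Then h(t) is real and strictly positive for every t ∈ ℝ ∪ {iσ : σ ∈ ℝ, |σ| < 1/2}. -/
import Mathlib

open scoped ComplexOrder

/-- The amplifier weight function
`h(t) = e^{−(t/T)²} T^{−6N−24} (t² + (1/2+iτ)²)³ (t² + (1/2−iτ)²)³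
  Π_{n=1}^{N+2} (t² + (n−1/2)²)(t² + (n+iτ−1/2)²)(t² + (n−iτ−1/2)²)`. -/
noncomputable def hAmp (T τ : ℝ) (N : ℕ) (t : ℂ) : ℂ :=
  Complex.exp (-(t / (T : ℂ)) ^ 2) * (T : ℂ) ^ (-(6 * (N : ℤ)) - 24) *
    (t ^ 2 + (1 / 2 + Complex.I * τ) ^ 2) ^ 3 *
    (t ^ 2 + (1 / 2 - Complex.I * τ) ^ 2) ^ 3 *
    ∏ n ∈ Finset.Icc 1 (N + 2),
      (t ^ 2 + ((n : ℂ) - 1 / 2) ^ 2) *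
        (t ^ 2 + ((n : ℂ) + Complex.I * τ - 1 / 2) ^ 2) *
        (t ^ 2 + ((n : ℂ) - Complex.I * τ - 1 / 2) ^ 2)

lemma conj_pair_pos {z : ℂ} (hz : z ≠ 0) : 0 < z * (starRingEnd ℂ) z := by
  rw [Complex.mul_conj]
  exact Complex.zero_lt_real.mpr (Complex.normSq_pos.mpr hz)

lemma hAmp_pos_of (T : ℝ) (hT : 1 ≤ T) (τ : ℝ) (N : ℕ) (u : ℂ) (a : ℝ)
    (hu : u ^ 2 = (a : ℂ)) (ha : -(1/4 : ℝ) < a) : 0 < hAmp T τ N u := by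
  have hT0 : (0:ℝ) < T := lt_of_lt_of_le one_pos hT
  unfold hAmp
  have h1 : 0 < Complex.exp (-(u / T) ^ 2) := by
    have : -(u / T) ^ 2 = ((-(a / T^2) : ℝ) : ℂ) := by
      rw [div_pow, hu]; push_cast; ring
    rw [this, ← Complex.ofReal_exp]
    exact Complex.zero_lt_real.mpr (Real.exp_pos _)
  have h2 : 0 < (T : ℂ) ^ (-(6 * (N : ℤ)) - 24) := by
    rw [← Complex.ofReal_zpow]
    exact Complex.zero_lt_real.mpr (zpow_pos hT0 _)
  rw [hu]
  -- the conjugate pair of cubes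
  have hA : ((a : ℂ) + (1 / 2 + Complex.I * τ) ^ 2) ≠ 0 := by
    intro h
    have him := congrArg Complex.im h
    have hre := congrArg Complex.re h
    simp [Complex.ext_iff, sq, Complex.add_im, Complex.add_re, Complex.mul_re,
      Complex.mul_im] at him hre
    nlinarith [him, hre]
  have hBconj : ((a : ℂ) + (1 / 2 - Complex.I * τ) ^ 2)
      = (starRingEnd ℂ) ((a : ℂ) + (1 / 2 + Complex.I * τ) ^ 2) := by
    simp only [map_add, map_sub, map_pow, map_mul, map_div₀, map_one, map_ofNat,
      Complex.conj_I, Complex.conj_ofReal]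
    ring
  have h3 : 0 < ((a : ℂ) + (1 / 2 + Complex.I * τ) ^ 2) ^ 3 *
      ((a : ℂ) + (1 / 2 - Complex.I * τ) ^ 2) ^ 3 := by
    rw [hBconj, ← mul_pow]
    exact pow_pos (conj_pair_pos hA) 3
  have h4 : 0 < ∏ n ∈ Finset.Icc 1 (N + 2),
      ((a : ℂ) + ((n : ℂ) - 1 / 2) ^ 2) *
        ((a : ℂ) + ((n : ℂ) + Complex.I * τ - 1 / 2) ^ 2) *
        ((a : ℂ) + ((n : ℂ) - Complex.I * τ - 1 / 2) ^ 2) := by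
    apply Finset.prod_pos
    intro n hn
    have hn1 : 1 ≤ n := (Finset.mem_Icc.mp hn).1
    have hn1' : (1:ℝ) ≤ (n:ℝ) := by exact_mod_cast hn1
    have hf1 : 0 < ((a : ℂ) + ((n : ℂ) - 1 / 2) ^ 2) := by
      have : ((a : ℂ) + ((n : ℂ) - 1 / 2) ^ 2) = ((a + ((n:ℝ) - 1/2)^2 : ℝ) : ℂ) := by
        push_cast; ring
      rw [this]
      apply Complex.zero_lt_real.mpr
      nlinarith
    have hz : ((a : ℂ) + ((n : ℂ) + Complex.I * τ - 1 / 2) ^ 2) ≠ 0 := by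
      intro h
      have him := congrArg Complex.im h
      have hre := congrArg Complex.re h
      simp [Complex.ext_iff, sq, Complex.add_im, Complex.add_re, Complex.sub_im,
        Complex.sub_re, Complex.mul_re, Complex.mul_im] at him hre
      have h2' : τ * ((n:ℝ) - 2⁻¹) = 0 := by linarith
      rcases mul_eq_zero.mp h2' with h0 | h0
      · rw [h0] at hre; nlinarith
      · linarith
    have hconj : ((a : ℂ) + ((n : ℂ) - Complex.I * τ - 1 / 2) ^ 2)
        = (starRingEnd ℂ) ((a : ℂ) + ((n : ℂ) + Complex.I * τ - 1 / 2) ^ 2) := by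
      simp only [map_add, map_sub, map_pow, map_mul, map_div₀, map_one, map_ofNat,
        Complex.conj_I, Complex.conj_ofReal, Complex.conj_natCast]
      ring
    rw [mul_assoc, hconj]
    exact mul_pos hf1 (conj_pair_pos hz)
  calc (0:ℂ) < (Complex.exp (-(u / ↑T) ^ 2) * ↑T ^ (-(6 * (N:ℤ)) - 24)) *
      (((a : ℂ) + (1 / 2 + Complex.I * τ) ^ 2) ^ 3 *
        ((a : ℂ) + (1 / 2 - Complex.I * τ) ^ 2) ^ 3) * _ :=
      mul_pos (mul_pos (mul_pos h1 h2) h3) h4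
    _ = _ := by ring

/-- `h(t)` is real and strictly positive for all `t ∈ ℝ ∪ {iσ : |σ| < 1/2}`. -/
theorem hAmp_real_and_pos (T : ℝ) (hT : 1 ≤ T) (τ : ℝ) (N : ℕ) (hN : 1 ≤ N) :
    (∀ t : ℝ, (hAmp T τ N (t : ℂ)).im = 0 ∧ 0 < (hAmp T τ N (t : ℂ)).re) ∧
    (∀ σ : ℝ, |σ| < 1 / 2 →
      (hAmp T τ N (Complex.I * σ)).im = 0 ∧ 0 < (hAmp T τ N (Complex.I * σ)).re) := by
  constructor
  · intro t
    have h : 0 < hAmp T τ N (t : ℂ) := by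
      apply hAmp_pos_of T hT τ N _ (t^2)
      · push_cast; ring
      · nlinarith [sq_nonneg t]
    rw [Complex.lt_def] at h
    simp only [Complex.zero_re, Complex.zero_im] at h
    exact ⟨h.2.symm, h.1⟩
  · intro σ hσ
    have h : 0 < hAmp T τ N (Complex.I * σ) := by
      apply hAmp_pos_of T hT τ N _ (-σ^2)
      · push_cast
        rw [mul_pow, Complex.I_sq]; ring
      · have h1 := (abs_lt.mp hσ).1
        have h2 := (abs_lt.mp hσ).2
        nlinarith
    rw [Complex.lt_def] at h
    simp only [Complex.zero_re, Complex.zero_im] at h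
    exact ⟨h.2.symm, h.1⟩
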